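/- As an additive subgroup of R = ℤ × ℤ[√2] × ℤ[√3], the subring W has index 8, i.e. the quotient group R/W has exactly 8 elements. -/

import Mathlib

/-! The defects of the three congruences defining `W` give an additive map `R → (ℤ/2)³`; it is
onto (already on `0 × ℤ[√2] × ℤ[√3]`) and its kernel is `W`, so `R/W ≅ (ℤ/2)³`. -/

abbrev Rng : Type := ℤ × Zsqrtd 2 × Zsqrtd 3

def Wset : Set Rng :=
  {p | p.1 ≡ p.2.1.re [ZMOD 2] ∧ p.1 ≡ p.2.2.re + p.2.2.im [ZMOD 2] ∧
       p.2.1.im ≡ p.2.2.im [ZMOD 2]}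

private lemma modeq_iff (a b : ℤ) : a ≡ b [ZMOD 2] ↔ ((a : ZMod 2) = b) :=
  (ZMod.intCast_eq_intCast_iff a b 2).symm

def W : Subring Rng where
  carrier := Wset
  zero_mem' := by refine ⟨?_, ?_, ?_⟩ <;> decide
  one_mem' := by refine ⟨?_, ?_, ?_⟩ <;> decide
  add_mem' := by
    rintro a b ⟨h1, h2, h3⟩ ⟨g1, g2, g3⟩
    refine ⟨h1.add g1, ?_, h3.add g3⟩
    simpa [add_add_add_comm] using h2.add g2
  neg_mem' := by
    rintro a ⟨h1, h2, h3⟩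
    refine ⟨h1.neg, ?_, h3.neg⟩
    have := h2.neg
    simp only [Wset, Set.mem_setOf_eq, Prod.fst_neg, Prod.snd_neg, Zsqrtd.re_neg,
      Zsqrtd.im_neg, Int.modEq_iff_dvd] at this ⊢
    omega
  mul_mem' := by
    rintro a b ⟨h1, h2, h3⟩ ⟨g1, g2, g3⟩
    simp only [Wset, Set.mem_setOf_eq, Prod.fst_mul, Prod.snd_mul, Zsqrtd.re_mul,
      Zsqrtd.im_mul, modeq_iff] at h1 h2 h3 g1 g2 g3 ⊢
    push_cast at h1 h2 h3 g1 g2 g3 ⊢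
    have h0 : (2 : ZMod 2) = 0 := rfl
    refine ⟨?_, ?_, ?_⟩
    · rw [← h1, ← g1, h0]; ring
    · linear_combination (b.1 : ZMod 2) * h2 + ((a.2.2.re : ZMod 2) + a.2.2.im) * g2 -
        ((a.2.2.im : ZMod 2) * b.2.2.im) * h0
    · linear_combination (b.2.1.im : ZMod 2) * h2 - (b.2.1.im : ZMod 2) * h1
        + (b.2.1.re : ZMod 2) * h3 + ((a.2.2.re : ZMod 2) + a.2.2.im) * g3
        + (a.2.2.im : ZMod 2) * g2 - (a.2.2.im : ZMod 2) * g1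
        + ((a.2.2.im : ZMod 2) * b.2.2.im) * h0

lemma mem_W_iff (x : Rng) : x ∈ W ↔ x ∈ Wset := Iff.rfl

lemma intCast_sub_eq_zero_iff_modEq (n : ℕ) (a b : ℤ) :
    ((b - a : ℤ) : ZMod n) = 0 ↔ a ≡ b [ZMOD n] :=
  (ZMod.intCast_zmod_eq_zero_iff_dvd _ n).trans Int.modEq_iff_dvd.symm

def congruenceDefect : Rng →+ ZMod 2 × ZMod 2 × ZMod 2 where
  toFun p := (((p.2.1.re - p.1 : ℤ) : ZMod 2), ((p.2.2.re + p.2.2.im - p.1 : ℤ) : ZMod 2),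
    ((p.2.2.im - p.2.1.im : ℤ) : ZMod 2))
  map_zero' := by simp
  map_add' a b := by
    simp only [Prod.fst_add, Prod.snd_add, Zsqrtd.re_add, Zsqrtd.im_add, Prod.mk_add_mk]
    push_cast
    refine Prod.ext ?_ (Prod.ext ?_ ?_) <;> ring

lemma congruenceDefect_surjective : Function.Surjective congruenceDefect := by
  rintro ⟨x, y, z⟩
  refine ⟨(0, ⟨x.cast, z.cast⟩, ⟨y.cast, 0⟩), ?_⟩
  simp [congruenceDefect]

lemma ker_congruenceDefect : congruenceDefect.ker = W.toAddSubgroup := by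
  ext p
  simp only [AddMonoidHom.mem_ker, congruenceDefect, AddMonoidHom.coe_mk, ZeroHom.coe_mk,
    Prod.mk_eq_zero, intCast_sub_eq_zero_iff_modEq]
  rfl

/-- As an additive subgroup of `R = ℤ × ℤ[√2] × ℤ[√3]`, the subring `W` has index `8`:
the quotient group `R/W` has exactly `8` elements. -/
theorem stmt2 : Nat.card (Rng ⧸ W.toAddSubgroup) = 8 := by
  rw [← ker_congruenceDefect, Nat.card_congr
    (QuotientAddGroup.quotientKerEquivOfSurjective _ congruenceDefect_surjective).toEquiv]
  simp [Nat.card_eq_fintype_card]
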